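/- An automorphism f of Λ_m that fixes every primitive idempotent e_i, and sends β_i ↦ b_iβ_i (4 ≤ i ≤ m), α_i ↦ a_iα_i, δ_i ↦ c_iδ_i (i = 1,2) with a_1c_1 = a_2c_2, is inner if and only if a_1c_1b_mb_{m-1}⋯b_4 = 1. -/

import Mathlib

/-- Generators of the algebra `Λ_m`: the vertex idempotents `e_i` (`i = 1,…,m`,
here `0`-indexed), the arrows `α₁ : 3 → 1`, `α₂ : 3 → 2`, `δ₁ : 1 → m`,
`δ₂ : 2 → m` and the arrows `β_i : i → i-1` for `4 ≤ i ≤ m` (here the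
generators `β j` with `j.val < 3` are junk and are killed by a relation). -/
inductive LamGen (m : ℕ) where
  | e : Fin m → LamGen m
  | α : Fin 2 → LamGen m
  | δ : Fin 2 → LamGen m
  | β : Fin m → LamGen m

namespace LamGen

/-- The generator is an arrow (not a vertex idempotent). -/
def IsArrow {m : ℕ} : LamGen m → Prop
  | e _ => False
  | _ => True

variable (k : Type*) [Field k] (m : ℕ) (hm : 4 ≤ m)

open FreeAlgebra

/-- The defining relations of `Λ_m`, as a relation on the free algebra on the
generators: the path-algebra relations for the quiver `Q_m` (orthogonal idempotents
summing to `1`, source/target relations for the arrows), the commutativity relation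
`α₁δ₁ = α₂δ₂` and the vanishing of all paths of length `m`.  Multiplication is
written in path order (`αβ` means “first `α`, then `β`”). -/
inductive Rel : FreeAlgebra k (LamGen m) → FreeAlgebra k (LamGen m) → Prop
  | idem (i j : Fin m) :
      Rel (ι k (e i) * ι k (e j)) (if i = j then ι k (e i) else 0)
  | sum_one : Rel (∑ i : Fin m, ι k (e i)) 1
  | alpha_src (i : Fin 2) :
      Rel (ι k (e ⟨2, by omega⟩) * ι k (α i)) (ι k (α i))
  | alpha_tgt (i : Fin 2) :
      Rel (ι k (α i) * ι k (e ⟨i.val, by omega⟩)) (ι k (α i))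
  | delta_src (i : Fin 2) :
      Rel (ι k (e ⟨i.val, by omega⟩) * ι k (δ i)) (ι k (δ i))
  | delta_tgt (i : Fin 2) :
      Rel (ι k (δ i) * ι k (e ⟨m - 1, by omega⟩)) (ι k (δ i))
  | beta_junk (j : Fin m) (h : j.val < 3) : Rel (ι k (β j)) 0
  | beta_src (j : Fin m) (h : 3 ≤ j.val) :
      Rel (ι k (e j) * ι k (β j)) (ι k (β j))
  | beta_tgt (j : Fin m) (h : 3 ≤ j.val) :
      Rel (ι k (β j) * ι k (e ⟨j.val - 1, by omega⟩)) (ι k (β j))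
  | comm : Rel (ι k (α 0) * ι k (δ 0)) (ι k (α 1) * ι k (δ 1))
  | long (w : Fin m → LamGen m) (hw : ∀ n, IsArrow (w n)) :
      Rel ((List.ofFn fun n : Fin m => ι k (w n)).prod) 0

end LamGen

/-- The symmetric representation-finite algebra `Λ_m` of type `D_m`
(the Double Edge algebra of the star with `m-2` regular edges and a double edge). -/
abbrev Lam (k : Type*) [Field k] (m : ℕ) (hm : 4 ≤ m) :=
  RingQuot (LamGen.Rel k m hm)

namespace LamGen

variable (k : Type*) [Field k] (m : ℕ) (hm : 4 ≤ m)

/-- The canonical projection onto `Λ_m`. -/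
noncomputable def π : FreeAlgebra k (LamGen m) →ₐ[k] Lam k m hm :=
  RingQuot.mkAlgHom k (Rel k m hm)

/-- The vertex idempotents `e_i ∈ Λ_m`. -/
noncomputable def eL (i : Fin m) : Lam k m hm := π k m hm (FreeAlgebra.ι k (e i))

/-- The arrows `α_i ∈ Λ_m`. -/
noncomputable def αL (i : Fin 2) : Lam k m hm := π k m hm (FreeAlgebra.ι k (α i))

/-- The arrows `δ_i ∈ Λ_m`. -/
noncomputable def δL (i : Fin 2) : Lam k m hm := π k m hm (FreeAlgebra.ι k (δ i))

/-- The arrows `β_j ∈ Λ_m`. -/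
noncomputable def βL (j : Fin m) : Lam k m hm := π k m hm (FreeAlgebra.ι k (β j))

end LamGen

open LamGen

/-!
If `f` is conjugation by a unit `u`, represent `Λ_m` by `m × m` matrices over the dual numbers
`k[ε]`, sending `e_i` to the matrix unit `E_ii` and an arrow `s → t` to `ε E_st`; since `ε² = 0`,
all paths of length `m ≥ 2` go to zero. The image of `u` commutes with every `E_ii`, so it is
diagonal with invertible entries, and the `ε`-coefficients of `u f(x) = x u` say that the constant
terms `μ_i` of these entries form a potential: every arrow `s → t` scaled by `w` has
`w μ_s = μ_t`. Conversely, if `μ` is a potential then `f` is conjugation by `∑ μ_i e_i`. Finally,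
going around the cycle `3 → 1 → m → m-1 → ⋯ → 4 → 3` shows that a potential exists if and only if
`a₁c₁b_m⋯b₄ = 1`; the condition `a₁c₁ = a₂c₂` makes the second path `3 → 2 → m` consistent.
-/

namespace Matrix

lemma isUnit_apply_self_of_commute_single {n R : Type*} [Fintype n] [DecidableEq n] [CommRing R]
    {U : Matrix n n R} (hU : IsUnit U) (hc : ∀ i, Commute (single i i 1) U) (i : n) :
    IsUnit (U i i) := by
  have hdiag : U = diagonal U.diag := by
    ext p q
    by_cases hpq : p = q
    · simp [hpq]
    · simp [hpq, col_eq_zero_of_commute_single (hc q) hpq]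
  rw [hdiag, isUnit_diagonal, Pi.isUnit_iff] at hU
  exact hU i

open DualNumber TrivSqZeroExt in
lemma mul_fst_eq_of_mul_smul_eps_single {n k : Type*} [Fintype n] [DecidableEq n] [CommRing k]
    {U : Matrix n n k[ε]} {s : k} {v w : n}
    (h : U * s • (ε : k[ε]) • single v w 1 = (ε : k[ε]) • single v w 1 * U) :
    s * fst (U v v) = fst (U w w) := by
  simpa [mul_comm] using congrArg snd (congrFun₂ h v w)

end Matrix

open Matrix

namespace LamGen

section Relations

variable {k : Type*} [Field k] {m : ℕ} {hm : 4 ≤ m}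

lemma π_eq_of_rel {x y : FreeAlgebra k (LamGen m)} (h : Rel k m hm x y) :
    π k m hm x = π k m hm y :=
  RingQuot.mkAlgHom_rel k h

lemma eL_mul_eL (i j : Fin m) :
    eL k m hm i * eL k m hm j = if i = j then eL k m hm i else 0 := by
  have h := π_eq_of_rel (k := k) (hm := hm) (.idem i j)
  rwa [map_mul, apply_ite (π k m hm), map_zero] at h

lemma eL_mul_self (i : Fin m) : eL k m hm i * eL k m hm i = eL k m hm i := by
  rw [eL_mul_eL, if_pos rfl]

lemma sum_eL : ∑ i : Fin m, eL k m hm i = 1 :=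
  (map_sum _ _ _).symm.trans ((π_eq_of_rel .sum_one).trans (map_one _))

lemma eL_mul_αL (i : Fin 2) : eL k m hm ⟨2, by omega⟩ * αL k m hm i = αL k m hm i :=
  (map_mul _ _ _).symm.trans (π_eq_of_rel (.alpha_src i))

lemma αL_mul_eL (i : Fin 2) : αL k m hm i * eL k m hm ⟨i, by omega⟩ = αL k m hm i :=
  (map_mul _ _ _).symm.trans (π_eq_of_rel (.alpha_tgt i))

lemma eL_mul_δL (i : Fin 2) : eL k m hm ⟨i, by omega⟩ * δL k m hm i = δL k m hm i :=
  (map_mul _ _ _).symm.trans (π_eq_of_rel (.delta_src i))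

lemma δL_mul_eL (i : Fin 2) : δL k m hm i * eL k m hm ⟨m - 1, by omega⟩ = δL k m hm i :=
  (map_mul _ _ _).symm.trans (π_eq_of_rel (.delta_tgt i))

lemma βL_eq_zero (j : Fin m) (hj : j.val < 3) : βL k m hm j = 0 :=
  (π_eq_of_rel (.beta_junk j hj)).trans (map_zero _)

lemma eL_mul_βL (j : Fin m) (hj : 3 ≤ j.val) : eL k m hm j * βL k m hm j = βL k m hm j :=
  (map_mul _ _ _).symm.trans (π_eq_of_rel (.beta_src j hj))

lemma βL_mul_eL (j : Fin m) (hj : 3 ≤ j.val) :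
    βL k m hm j * eL k m hm ⟨j - 1, by omega⟩ = βL k m hm j :=
  (map_mul _ _ _).symm.trans (π_eq_of_rel (.beta_tgt j hj))

section DiagonalUnits

variable {s t : Fin m} {x : Lam k m hm}

lemma sum_smul_eL_mul (p : Fin m → k) (hx : eL k m hm s * x = x) :
    (∑ j, p j • eL k m hm j) * x = p s • x := by
  rw [Finset.sum_mul, Finset.sum_eq_single s (fun j _ hj => ?_) (by simp), smul_mul_assoc, hx]
  rw [← hx, smul_mul_assoc, ← mul_assoc, eL_mul_eL, if_neg hj, zero_mul, smul_zero]

lemma mul_sum_smul_eL (p : Fin m → k) (hx : x * eL k m hm t = x) :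
    x * (∑ j, p j • eL k m hm j) = p t • x := by
  rw [Finset.mul_sum, Finset.sum_eq_single t (fun j _ hj => ?_) (by simp), mul_smul_comm, hx]
  rw [← hx, mul_smul_comm, mul_assoc, eL_mul_eL, if_neg hj.symm, mul_zero, smul_zero]

lemma sum_smul_eL_mul_sum_smul_eL (p q : Fin m → k) :
    (∑ j, p j • eL k m hm j) * (∑ j, q j • eL k m hm j) = ∑ j, (p j * q j) • eL k m hm j := by
  refine Finset.mul_sum _ _ _ |>.trans (Finset.sum_congr rfl fun j _ => ?_)
  rw [mul_smul_comm, sum_smul_eL_mul p (eL_mul_self j), smul_smul, mul_comm]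

noncomputable def diagUnit (μ : Fin m → kˣ) : (Lam k m hm)ˣ where
  val := ∑ j, (μ j : k) • eL k m hm j
  inv := ∑ j, (↑(μ j)⁻¹ : k) • eL k m hm j
  val_inv := by simp [sum_smul_eL_mul_sum_smul_eL, sum_eL]
  inv_val := by simp [sum_smul_eL_mul_sum_smul_eL, sum_eL]

lemma diagUnit_inv_mul_mul_diagUnit (μ : Fin m → kˣ) {w : kˣ} (hs : eL k m hm s * x = x)
    (ht : x * eL k m hm t = x) (hw : w * μ s = μ t) :
    ↑(diagUnit μ)⁻¹ * x * diagUnit μ = (w : k) • x := by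
  simp only [diagUnit, Units.inv_mk, Units.val_mk]
  rw [sum_smul_eL_mul _ hs, smul_mul_assoc, mul_sum_smul_eL _ ht, smul_smul, ← Units.val_mul,
    inv_mul_eq_of_eq_mul (hw.symm.trans (mul_comm _ _))]

end DiagonalUnits

end Relations

section Potential

variable {G : Type*} [CommGroup G] {m : ℕ} (hm : 4 ≤ m) (a c : Fin 2 → G) (b : Fin m → G)

structure IsPotential (μ : Fin m → G) : Prop where
  alpha (i : Fin 2) : a i * μ ⟨2, by omega⟩ = μ ⟨i, by omega⟩
  delta (i : Fin 2) : c i * μ ⟨i, by omega⟩ = μ ⟨m - 1, by omega⟩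
  beta (j : Fin m) (hj : 3 ≤ j.val) : b j * μ j = μ ⟨j - 1, by omega⟩

def betaProd (n : ℕ) : G := ∏ j ∈ Finset.univ.filter (fun j : Fin m => 3 ≤ j.val ∧ j.val ≤ n), b j

variable {b}

lemma betaProd_two : betaProd b 2 = 1 :=
  Finset.prod_eq_one fun j hj => by simp at hj; omega

lemma betaProd_succ {n : ℕ} (hn : n + 1 < m) (h3 : 3 ≤ n + 1) :
    betaProd b (n + 1) = b ⟨n + 1, hn⟩ * betaProd b n := by
  rw [betaProd, betaProd, ← Finset.prod_insert (by simp)]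
  refine congrArg (fun s => ∏ j ∈ s, b j) (Finset.ext fun j => ?_)
  simp only [Finset.mem_filter, Finset.mem_univ, true_and, Finset.mem_insert, Fin.ext_iff]
  omega

lemma betaProd_sub_one :
    betaProd b (m - 1) = ∏ j ∈ Finset.univ.filter (fun j : Fin m => 3 ≤ j.val), b j := by
  refine congrArg (fun s => ∏ j ∈ s, b j) (Finset.filter_congr fun j _ => ?_)
  have := j.isLt
  omega

variable {hm a c} {μ : Fin m → G}

lemma IsPotential.betaProd_mul (hμ : IsPotential hm a c b μ) {n : ℕ} (h2 : 2 ≤ n) (hn : n < m) :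
    betaProd b n * μ ⟨n, hn⟩ = μ ⟨2, by omega⟩ := by
  induction n, h2 using Nat.le_induction with
  | base => rw [betaProd_two, one_mul]
  | succ n h2 ih =>
    rw [betaProd_succ hn (by omega), mul_right_comm, hμ.beta ⟨n + 1, hn⟩ (by simp; omega),
      mul_comm]
    exact ih (by omega)

theorem exists_isPotential_iff (hac : a 0 * c 0 = a 1 * c 1) :
    (∃ μ, IsPotential hm a c b μ) ↔
      a 0 * c 0 * ∏ j ∈ Finset.univ.filter (fun j : Fin m => 3 ≤ j.val), b j = 1 := by
  constructor
  · rintro ⟨μ, hμ⟩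
    have hcycle := hμ.betaProd_mul (n := m - 1) (by omega) (by omega)
    rw [betaProd_sub_one, ← hμ.delta 0, ← hμ.alpha 0] at hcycle
    rw [← mul_eq_right (b := μ ⟨2, by omega⟩)]
    conv_rhs => rw [← hcycle]
    ac_rfl
  · intro h
    refine ⟨fun j => if j.val = 0 then a 0 else if j.val = 1 then a 1 else (betaProd b j)⁻¹,
      ⟨fun i => ?_, fun i => ?_, fun j hj => ?_⟩⟩
    · fin_cases i <;> simp [betaProd_two]
    · have hcycle : a 0 * c 0 = (betaProd b (m - 1))⁻¹ := by
        rw [betaProd_sub_one]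
        exact eq_inv_of_mul_eq_one_left h
      fin_cases i
      · simpa [show m - 1 ≠ 0 by omega, show m - 1 ≠ 1 by omega] using
          (mul_comm _ _).trans hcycle
      · simpa [show m - 1 ≠ 0 by omega, show m - 1 ≠ 1 by omega] using
          (mul_comm _ _).trans (hac.symm.trans hcycle)
    · obtain ⟨j, hjm⟩ := j
      change 3 ≤ j at hj
      obtain ⟨n, rfl⟩ : ∃ n, j = n + 1 := ⟨j - 1, by omega⟩
      have hsucc := betaProd_succ (b := b) hjm hj
      simp [show n ≠ 0 by omega, show n ≠ 1 by omega, hsucc]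

end Potential

section Representation

variable {m : ℕ} {R : Type*} [CommRing R]

def arrowMat (hm : 4 ≤ m) : LamGen m → Matrix (Fin m) (Fin m) R
  | .e _ => 0
  | .α i => single ⟨2, by omega⟩ ⟨i, by omega⟩ 1
  | .δ i => single ⟨i, by omega⟩ ⟨m - 1, by omega⟩ 1
  | .β j => if 3 ≤ j.val then single j ⟨j - 1, by omega⟩ 1 else 0

def genMat (hm : 4 ≤ m) (t : R) : LamGen m → Matrix (Fin m) (Fin m) R
  | .e i => single i i 1
  | g => t • arrowMat hm g

lemma genMat_of_isArrow (hm : 4 ≤ m) (t : R) {g : LamGen m} (hg : g.IsArrow) :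
    genMat hm t g = t • arrowMat hm g := by
  cases g
  exacts [hg.elim, rfl, rfl, rfl]

variable (k : Type*) [Field k] [Algebra k R] {hm : 4 ≤ m} {t : R}

lemma lift_genMat_eq_of_rel (ht : t ^ m = 0) ⦃x y : FreeAlgebra k (LamGen m)⦄
    (h : Rel k m hm x y) :
    FreeAlgebra.lift k (genMat hm t) x = FreeAlgebra.lift k (genMat hm t) y := by
  induction h with
  | idem i j => split_ifs with hij <;> simp [genMat, hij]
  | sum_one => simp [genMat, sum_single_one]
  | long w hw =>
    rw [map_list_prod, List.map_ofFn, map_zero]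
    have hw' : ⇑(FreeAlgebra.lift k (genMat hm t)) ∘ (fun n => FreeAlgebra.ι k (w n)) =
        (t • ·) ∘ fun n => arrowMat hm (w n) :=
      funext fun n => (FreeAlgebra.lift_ι_apply _ _).trans (genMat_of_isArrow hm t (hw n))
    rw [hw', ← List.map_ofFn, ← List.smul_prod, List.length_ofFn, ht, zero_smul]
  | _ => simp [genMat, arrowMat, *]

noncomputable def rep (hm : 4 ≤ m) (ht : t ^ m = 0) : Lam k m hm →ₐ[k] Matrix (Fin m) (Fin m) R :=
  RingQuot.liftAlgHom k ⟨FreeAlgebra.lift k (genMat hm t), lift_genMat_eq_of_rel k ht⟩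

lemma rep_π_ι (ht : t ^ m = 0) (g : LamGen m) :
    rep k hm ht (π k m hm (FreeAlgebra.ι k g)) = genMat hm t g := by
  rw [rep, π, RingQuot.liftAlgHom_mkAlgHom_apply, FreeAlgebra.lift_ι_apply]

end Representation

section Conjugation

open DualNumber TrivSqZeroExt

variable {k : Type*} [Field k] {m : ℕ} {hm : 4 ≤ m}

theorem exists_isPotential_of_conj (u : (Lam k m hm)ˣ) {a c : Fin 2 → kˣ} {b : Fin m → kˣ}
    (he : ∀ i, ↑u⁻¹ * eL k m hm i * u = eL k m hm i)
    (hα : ∀ i, ↑u⁻¹ * αL k m hm i * u = (a i : k) • αL k m hm i)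
    (hδ : ∀ i, ↑u⁻¹ * δL k m hm i * u = (c i : k) • δL k m hm i)
    (hβ : ∀ j : Fin m, 3 ≤ j.val → ↑u⁻¹ * βL k m hm j * u = (b j : k) • βL k m hm j) :
    ∃ μ : Fin m → kˣ, IsPotential hm a c b μ := by
  set ρ := rep k hm (pow_eq_zero_of_le (by omega) (eps_pow_two : (ε : k[ε]) ^ 2 = 0))
  have hρ (x y : Lam k m hm) (h : ↑u⁻¹ * x * u = y) : ρ u * ρ y = ρ x * ρ u := by
    rw [← map_mul, ← map_mul, ← h, ← mul_assoc, ← mul_assoc, Units.mul_inv, one_mul]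
  have hcomm (i : Fin m) : Commute (single i i 1) (ρ u) := by
    have h := (hρ _ _ (he i)).symm
    rw [show ρ (eL k m hm i) = single i i 1 from rep_π_ι k _ (e i)] at h
    exact h
  have hunit (i : Fin m) : IsUnit (fst (ρ u i i)) :=
    (isUnit_apply_self_of_commute_single (u.isUnit.map ρ) hcomm i).map (fstHom k k k)
  have hscale {x : Lam k m hm} {s : k} {v w : Fin m} (hx : ρ x = (ε : k[ε]) • single v w 1)
      (h : ↑u⁻¹ * x * u = s • x) : s * (hunit v).unit = (hunit w).unit := by
    have := hρ _ _ h
    rw [map_smul, hx] at this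
    exact mul_fst_eq_of_mul_smul_eps_single this
  refine ⟨fun i => (hunit i).unit,
    ⟨fun i => Units.ext ?_, fun i => Units.ext ?_, fun j hj => Units.ext ?_⟩⟩
  · exact hscale (rep_π_ι k _ (α i)) (hα i)
  · exact hscale (rep_π_ι k _ (δ i)) (hδ i)
  · exact hscale ((rep_π_ι k _ (β j)).trans (by simp [genMat, arrowMat, hj])) (hβ j hj)

theorem eq_conj_diagUnit_of_isPotential (f : Lam k m hm →ₐ[k] Lam k m hm)
    {a c : Fin 2 → kˣ} {b : Fin m → kˣ} {μ : Fin m → kˣ}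
    (hfe : ∀ i, f (eL k m hm i) = eL k m hm i)
    (hfα : ∀ i, f (αL k m hm i) = (a i : k) • αL k m hm i)
    (hfδ : ∀ i, f (δL k m hm i) = (c i : k) • δL k m hm i)
    (hfβ : ∀ j : Fin m, 3 ≤ j.val → f (βL k m hm j) = (b j : k) • βL k m hm j)
    (hμ : IsPotential hm a c b μ) (x : Lam k m hm) :
    f x = ↑(diagUnit μ)⁻¹ * x * diagUnit μ := by
  set g := MulSemiringAction.toAlgHom k (Lam k m hm) (ConjAct.toConjAct (diagUnit (hm := hm) μ)⁻¹)
  have hg (y : Lam k m hm) : g y = ↑(diagUnit μ)⁻¹ * y * diagUnit μ := by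
    simp [g, ConjAct.units_smul_def]
  suffices f = g by rw [this, hg]
  refine RingQuot.ringQuot_ext' k _ _ (FreeAlgebra.hom_ext (funext fun gen => ?_))
  change f (π k m hm (FreeAlgebra.ι k gen)) = g (π k m hm (FreeAlgebra.ι k gen))
  rw [hg]
  cases gen with
  | e i =>
    change f (eL k m hm i) = _ * eL k m hm i * _
    rw [hfe, diagUnit_inv_mul_mul_diagUnit μ (w := 1) (eL_mul_self i) (eL_mul_self i) (one_mul _),
      Units.val_one, one_smul]
  | α i =>
    exact (hfα i).trans
      (diagUnit_inv_mul_mul_diagUnit μ (eL_mul_αL i) (αL_mul_eL i) (hμ.alpha i)).symm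
  | δ i =>
    exact (hfδ i).trans
      (diagUnit_inv_mul_mul_diagUnit μ (eL_mul_δL i) (δL_mul_eL i) (hμ.delta i)).symm
  | β j =>
    by_cases hj : 3 ≤ j.val
    · exact (hfβ j hj).trans
        (diagUnit_inv_mul_mul_diagUnit μ (eL_mul_βL j hj) (βL_mul_eL j hj) (hμ.beta j hj)).symm
    · change f (βL k m hm j) = _ * βL k m hm j * _
      rw [βL_eq_zero j (by omega), map_zero, mul_zero, zero_mul]

end Conjugation

end LamGen

theorem stmt_5_general (k : Type*) [Field k] (m : ℕ) (hm : 4 ≤ m)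
    (f : Lam k m hm ≃ₐ[k] Lam k m hm)
    (a c : Fin 2 → kˣ) (b : Fin m → kˣ)
    (hfe : ∀ i : Fin m, f (eL k m hm i) = eL k m hm i)
    (hfα : ∀ i : Fin 2, f (αL k m hm i) = (a i : k) • αL k m hm i)
    (hfδ : ∀ i : Fin 2, f (δL k m hm i) = (c i : k) • δL k m hm i)
    (hfβ : ∀ j : Fin m, 3 ≤ j.val → f (βL k m hm j) = (b j : k) • βL k m hm j)
    (hac : (a 0 : k) * (c 0 : k) = (a 1 : k) * (c 1 : k)) :
    (∃ u : (Lam k m hm)ˣ, ∀ x, f x = ↑u⁻¹ * x * ↑u) ↔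
      (a 0 : k) * (c 0 : k) *
        ∏ j ∈ Finset.univ.filter (fun j : Fin m => 3 ≤ j.val), (b j : k) = 1 := by
  have hval : ((a 0 * c 0 * ∏ j ∈ Finset.univ.filter (fun j : Fin m => 3 ≤ j.val), b j : kˣ) : k) =
      (a 0 : k) * (c 0 : k) * ∏ j ∈ Finset.univ.filter (fun j : Fin m => 3 ≤ j.val), (b j : k) := by
    simp
  rw [← hval, Units.val_eq_one,
    ← exists_isPotential_iff (hm := hm) (Units.ext (by simpa using hac))]
  constructor
  · rintro ⟨u, hu⟩
    exact exists_isPotential_of_conj u (fun i => (hu _).symm.trans (hfe i))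
      (fun i => (hu _).symm.trans (hfα i)) (fun i => (hu _).symm.trans (hfδ i))
      (fun j hj => (hu _).symm.trans (hfβ j hj))
  · rintro ⟨μ, hμ⟩
    exact ⟨diagUnit μ, eq_conj_diagUnit_of_isPotential f.toAlgHom hfe hfα hfδ hfβ hμ⟩

/-- An automorphism `f` of `Λ_m` that fixes every primitive
idempotent `e_i` and sends `β_i ↦ b_iβ_i` (`4 ≤ i ≤ m`), `α_i ↦ a_iα_i`,
`δ_i ↦ c_iδ_i` (`i = 1,2`), with `a₁c₁ = a₂c₂`, is inner if and only if
`a₁c₁b_mb_{m-1}⋯b₄ = 1`. -/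
theorem stmt_5 (k : Type*) [Field k] [IsAlgClosed k] (m : ℕ) (hm : 4 ≤ m)
    (f : Lam k m hm ≃ₐ[k] Lam k m hm)
    (a c : Fin 2 → kˣ) (b : Fin m → kˣ)
    (hfe : ∀ i : Fin m, f (eL k m hm i) = eL k m hm i)
    (hfα : ∀ i : Fin 2, f (αL k m hm i) = (a i : k) • αL k m hm i)
    (hfδ : ∀ i : Fin 2, f (δL k m hm i) = (c i : k) • δL k m hm i)
    (hfβ : ∀ j : Fin m, 3 ≤ j.val → f (βL k m hm j) = (b j : k) • βL k m hm j)
    (hac : (a 0 : k) * (c 0 : k) = (a 1 : k) * (c 1 : k)) :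
    (∃ u : (Lam k m hm)ˣ, ∀ x, f x = ↑u⁻¹ * x * ↑u) ↔
      (a 0 : k) * (c 0 : k) *
        ∏ j ∈ Finset.univ.filter (fun j : Fin m => 3 ≤ j.val), (b j : k) = 1 :=
  stmt_5_general k m hm f a c b hfe hfα hfδ hfβ hac
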